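/- arXiv:math/0604266 — 2 statements merged into one kernel-verified Lean document; each statement's English description precedes it below -/
import Mathlib

section
/- Let ρ be a nonzero σ-finite Borel measure on (0,1) with ∫₀¹ u ρ(du) < ∞; set φ(r) = ∫₀¹ (1 − (1−u)^r) ρ(du) and κ_{d,r}(ρ) = ∫₀¹ u^d (1−u)^r ρ(du). Let m = (D_1,…,D_k) be an ordered partition of {1,…,n} into nonempty blocks, with d_j = |D_j|, r_0 = 0, r_j = d_1 + ⋯ + d_j, and weight w(m) = Π_{j=1}^{k} κ_{d_j, r_{j−1}}(ρ)/φ(r_j). If m′ is the ordered partition of {1,…,n+1} obtained from m by inserting the new singleton block {n+1} at rank j (for some 1 ≤ j ≤ k+1, shifting blocks D_j,…,D_k to ranks j+1,…,k+1), then w(m′) = q_{j:n} · w(m), where q_{j:n} = [κ_{1, r_{j−1}}(ρ)/φ(r_{j−1}+1)] · Π_{l=j}^{k} [κ_{d_l, r_{l−1}+1}(ρ)/κ_{d_l, r_{l−1}}(ρ)] · Π_{l=j}^{k} φ(r_l)/φ(r_l+1); in particular q_{k+1:n} = κ_{1,n}(ρ)/φ(n+1). -/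
open MeasureTheory

/-- κ_{d,r}(ρ) = ∫₀¹ u^d (1−u)^r ρ(du). -/
noncomputable def kappa (ρ : Measure ℝ) (d r : ℕ) : ℝ :=
  ∫ u in Set.Ioo (0:ℝ) 1, u ^ d * (1 - u) ^ r ∂ρ

/-- φ(r) = ∫₀¹ (1 − (1−u)^r) ρ(du). -/
noncomputable def phi (ρ : Measure ℝ) (r : ℕ) : ℝ :=
  ∫ u in Set.Ioo (0:ℝ) 1, (1 - (1 - u) ^ r) ∂ρ

/-- Cumulative block sizes: `cum D j = d_1 + ⋯ + d_j` (0-indexed), i.e. `r_{j-1}`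
when blocks are 1-indexed. -/
def cum (D : ℕ → Finset ℕ) (j : ℕ) : ℕ := ∑ i ∈ Finset.range j, (D i).card

/-- Weight of an ordered partition with blocks `D 0, …, D (k-1)`:
w(m) = Π_{j=1}^{k} κ_{d_j, r_{j−1}}(ρ)/φ(r_j). -/
noncomputable def wOrd (ρ : Measure ℝ) (D : ℕ → Finset ℕ) (k : ℕ) : ℝ :=
  ∏ j ∈ Finset.range k, kappa ρ (D j).card (cum D j) / phi ρ (cum D (j + 1))

/-!
Inserting `{n+1}` at rank `j` leaves the factors of the blocks before rank `j` unchanged, adds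
the factor `κ_{1,r_{j-1}} / φ(r_{j-1}+1)` for the new block, and raises every later `r_l` by one.
Each later factor `κ_{d_l,r_{l-1}+1} / φ(r_l+1)` is the old one times the two ratios collected
in `q_{j:n}`; this needs `κ_{d,r} ≠ 0` and `φ(r) ≠ 0`, which holds because the integrands are
positive on `(0,1)` and integrable, being bounded by `u` and `r u` respectively.
-/

open Finset

section Positivity

variable {ρ : Measure ℝ}

lemma setIntegral_pos_of_forall_pos {s : Set ℝ} (hs : MeasurableSet s) (hρs : ρ s ≠ 0)
    {f : ℝ → ℝ} (hf : IntegrableOn f s ρ) (hpos : ∀ u ∈ s, 0 < f u) :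
    0 < ∫ u in s, f u ∂ρ := by
  have hnonneg : 0 ≤ᵐ[ρ.restrict s] f := by
    filter_upwards [ae_restrict_mem hs] with u hmem using (hpos u hmem).le
  rw [setIntegral_pos_iff_support_of_nonneg_ae hnonneg hf]
  refine (pos_iff_ne_zero.mpr hρs).trans_le (measure_mono fun u hu => ⟨?_, hu⟩)
  exact (hpos u hu).ne'

lemma integrableOn_Ioo_of_abs_le_mul (hu : IntegrableOn (fun u => u) (Set.Ioo (0:ℝ) 1) ρ)
    {f : ℝ → ℝ} (hf : Continuous f) (C : ℝ) (hle : ∀ u ∈ Set.Ioo (0:ℝ) 1, |f u| ≤ C * u) :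
    IntegrableOn f (Set.Ioo (0:ℝ) 1) ρ := by
  refine (hu.const_mul C).mono' hf.aestronglyMeasurable ?_
  filter_upwards [ae_restrict_mem measurableSet_Ioo] with u hmem using hle u hmem

lemma kappa_pos (hρ : ρ (Set.Ioo (0:ℝ) 1) ≠ 0)
    (hu : IntegrableOn (fun u => u) (Set.Ioo (0:ℝ) 1) ρ) {d : ℕ} (hd : 1 ≤ d) (r : ℕ) :
    0 < kappa ρ d r := by
  refine setIntegral_pos_of_forall_pos measurableSet_Ioo hρ ?_ fun u ⟨h0, h1⟩ => by
    have : 0 < 1 - u := by linarith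
    positivity
  refine integrableOn_Ioo_of_abs_le_mul hu (by fun_prop) 1 fun u ⟨h0, h1⟩ => ?_
  have h1u : 0 ≤ 1 - u := by linarith
  rw [abs_of_nonneg (by positivity), one_mul]
  calc u ^ d * (1 - u) ^ r ≤ u ^ d * 1 := by gcongr; exact pow_le_one₀ h1u (by linarith)
    _ ≤ u := by rw [mul_one]; exact pow_le_of_le_one h0.le h1.le (by omega)

lemma phi_pos (hρ : ρ (Set.Ioo (0:ℝ) 1) ≠ 0)
    (hu : IntegrableOn (fun u => u) (Set.Ioo (0:ℝ) 1) ρ) {r : ℕ} (hr : 1 ≤ r) :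
    0 < phi ρ r := by
  refine setIntegral_pos_of_forall_pos measurableSet_Ioo hρ ?_ fun u ⟨h0, h1⟩ => by
    have := pow_lt_one₀ (n := r) (by linarith) (by linarith : 1 - u < 1) (by omega)
    linarith
  refine integrableOn_Ioo_of_abs_le_mul hu (by fun_prop) r fun u ⟨h0, h1⟩ => ?_
  have hbernoulli : 1 + r * -u ≤ (1 - u) ^ r := by
    simpa only [← sub_eq_add_neg] using one_add_mul_le_pow (a := -u) (by linarith) r
  have hle1 : (1 - u) ^ r ≤ 1 := pow_le_one₀ (by linarith) (by linarith)
  rw [abs_of_nonneg (by linarith)]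
  linarith

end Positivity

section Insertion

def insertAt (D : ℕ → Finset ℕ) (j : ℕ) (B : Finset ℕ) : ℕ → Finset ℕ :=
  fun i => if i < j then D i else if i = j then B else D (i - 1)

variable (D : ℕ → Finset ℕ) (j : ℕ) (B : Finset ℕ)

lemma cum_succ (i : ℕ) : cum D (i + 1) = cum D i + (D i).card :=
  sum_range_succ _ _

lemma cum_eq_card_biUnion {k : ℕ} (hdisj : ∀ i < k, ∀ i' < k, i ≠ i' → Disjoint (D i) (D i')) :
    cum D k = ((range k).biUnion D).card := by
  rw [card_biUnion fun i hi i' hi' => hdisj i (mem_range.mp hi) i' (mem_range.mp hi')]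
  rfl

lemma insertAt_of_lt {i : ℕ} (hi : i < j) : insertAt D j B i = D i := if_pos hi

lemma insertAt_self : insertAt D j B j = B := by simp [insertAt]

lemma insertAt_succ_of_le {i : ℕ} (hi : j ≤ i) : insertAt D j B (i + 1) = D i := by
  simp [insertAt, show ¬ i + 1 < j by omega, show i + 1 ≠ j by omega]

lemma cum_insertAt_of_le {i : ℕ} (hi : i ≤ j) : cum (insertAt D j B) i = cum D i :=
  sum_congr rfl fun l hl => by rw [insertAt_of_lt D j B (by simp at hl; omega)]

lemma cum_insertAt_succ_of_le {i : ℕ} (hi : j ≤ i) :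
    cum (insertAt D j B) (i + 1) = cum D i + B.card := by
  induction i, hi using Nat.le_induction with
  | base => rw [cum_succ, cum_insertAt_of_le D j B le_rfl, insertAt_self]
  | succ i hji ih =>
    rw [cum_succ, ih, insertAt_succ_of_le D j B hji, cum_succ]
    ring

lemma wOrd_eq_mul_prod_Ico (ρ : Measure ℝ) {k : ℕ} (hj : j ≤ k) :
    wOrd ρ D k = wOrd ρ D j *
      ∏ l ∈ Ico j k, kappa ρ (D l).card (cum D l) / phi ρ (cum D (l + 1)) :=
  (prod_range_mul_prod_Ico _ hj).symm

lemma wOrd_insertAt (ρ : Measure ℝ) {k : ℕ} (hj : j ≤ k) :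
    wOrd ρ (insertAt D j B) (k + 1) =
      wOrd ρ D j * (kappa ρ B.card (cum D j) / phi ρ (cum D j + B.card)) *
        ∏ l ∈ Ico j k, kappa ρ (D l).card (cum D l + B.card) /
          phi ρ (cum D (l + 1) + B.card) := by
  rw [wOrd, ← prod_range_mul_prod_Ico _ (by omega : j ≤ k + 1),
    prod_eq_prod_Ico_succ_bot (by omega : j < k + 1), ← prod_Ico_add', mul_assoc]
  congr 1
  · exact prod_congr rfl fun i hi => by
      have hi : i < j := mem_range.mp hi
      rw [insertAt_of_lt D j B hi, cum_insertAt_of_le D j B hi.le,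
        cum_insertAt_of_le D j B hi]
  · congr 1
    · rw [insertAt_self, cum_insertAt_of_le D j B le_rfl, cum_insertAt_succ_of_le D j B le_rfl]
    · exact prod_congr rfl fun l hl => by
        have hl : j ≤ l := (mem_Ico.mp hl).1
        rw [insertAt_succ_of_le D j B hl, cum_insertAt_succ_of_le D j B hl,
          cum_insertAt_succ_of_le D j B (by omega)]

end Insertion

theorem stmt_3_general (ρ : Measure ℝ)
    (hρ : ρ (Set.Ioo (0:ℝ) 1) ≠ 0)
    (hu : IntegrableOn (fun u => u) (Set.Ioo (0:ℝ) 1) ρ)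
    (n k : ℕ) (D : ℕ → Finset ℕ)
    (hne : ∀ i < k, (D i).Nonempty)
    (hdisj : ∀ i < k, ∀ i' < k, i ≠ i' → Disjoint (D i) (D i'))
    (hcover : (Finset.range k).biUnion D = Finset.Icc 1 n)
    (j0 : ℕ) (hj0 : j0 ≤ k)
    (D' : ℕ → Finset ℕ)
    (hD' : D' = fun i =>
      if i < j0 then D i else if i = j0 then {n + 1} else D (i - 1))
    (q : ℝ)
    (hq : q = kappa ρ 1 (cum D j0) / phi ρ (cum D j0 + 1) *
        (∏ l ∈ Finset.Ico j0 k,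
          kappa ρ (D l).card (cum D l + 1) / kappa ρ (D l).card (cum D l)) *
        ∏ l ∈ Finset.Ico j0 k, phi ρ (cum D (l + 1)) / phi ρ (cum D (l + 1) + 1)) :
    wOrd ρ D' (k + 1) = q * wOrd ρ D k ∧
      (j0 = k → q = kappa ρ 1 n / phi ρ (n + 1)) := by
  have hD'_eq : D' = insertAt D j0 {n + 1} := hD'
  have hfactor : ∀ l ∈ Ico j0 k,
      kappa ρ (D l).card (cum D l + 1) / phi ρ (cum D (l + 1) + 1) =
        kappa ρ (D l).card (cum D l + 1) / kappa ρ (D l).card (cum D l) *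
          (phi ρ (cum D (l + 1)) / phi ρ (cum D (l + 1) + 1)) *
          (kappa ρ (D l).card (cum D l) / phi ρ (cum D (l + 1))) := by
    intro l hl
    have hd : 1 ≤ (D l).card := card_pos.mpr (hne l (mem_Ico.mp hl).2)
    have hκ := (kappa_pos hρ hu hd (cum D l)).ne'
    have hφ := (phi_pos hρ hu (by rw [cum_succ]; omega : 1 ≤ cum D (l + 1))).ne'
    field_simp
  refine ⟨?_, fun hjk => ?_⟩
  · rw [hD'_eq, wOrd_insertAt D j0 _ ρ hj0, card_singleton, prod_congr rfl hfactor,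
      prod_mul_distrib, prod_mul_distrib, hq, wOrd_eq_mul_prod_Ico D j0 ρ hj0]
    ring
  · subst hjk
    rw [hq, cum_eq_card_biUnion D hdisj, hcover, Nat.card_Icc, Nat.add_sub_cancel]
    simp

/-- Inserting the singleton block {n+1} at rank j (0-indexed `j0 = j − 1`,
`0 ≤ j0 ≤ k`, shifting blocks of rank ≥ j up by one) multiplies the weight of the
ordered partition by the transition probability q_{j:n}; in particular
q_{k+1:n} = κ_{1,n}(ρ)/φ(n+1). -/
theorem stmt_3 (ρ : Measure ℝ) [SigmaFinite ρ]
    (hsupp : ρ (Set.Ioo (0:ℝ) 1)ᶜ = 0)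
    (hρ : ρ (Set.Ioo (0:ℝ) 1) ≠ 0)
    (hu : IntegrableOn (fun u => u) (Set.Ioo (0:ℝ) 1) ρ)
    (n k : ℕ) (D : ℕ → Finset ℕ)
    (hne : ∀ i < k, (D i).Nonempty)
    (hdisj : ∀ i < k, ∀ i' < k, i ≠ i' → Disjoint (D i) (D i'))
    (hcover : (Finset.range k).biUnion D = Finset.Icc 1 n)
    (j0 : ℕ) (hj0 : j0 ≤ k)
    (D' : ℕ → Finset ℕ)
    (hD' : D' = fun i =>
      if i < j0 then D i else if i = j0 then {n + 1} else D (i - 1))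
    (q : ℝ)
    (hq : q = kappa ρ 1 (cum D j0) / phi ρ (cum D j0 + 1) *
        (∏ l ∈ Finset.Ico j0 k,
          kappa ρ (D l).card (cum D l + 1) / kappa ρ (D l).card (cum D l)) *
        ∏ l ∈ Finset.Ico j0 k, phi ρ (cum D (l + 1)) / phi ρ (cum D (l + 1) + 1)) :
    wOrd ρ D' (k + 1) = q * wOrd ρ D k ∧
      (j0 = k → q = kappa ρ 1 n / phi ρ (n + 1)) :=
  stmt_3_general ρ hρ hu n k D hne hdisj hcover j0 hj0 D' hD' q hq
end

section
/- Fix 0 ≤ α < 1 and θ > 0, set c_{α,θ} = Γ(θ+2−α)/(Γ(1−α)Γ(1+θ)), and let ρ_{α,θ} be the measure on (0,1) with density u ↦ c_{α,θ}(α u^{−α−1}(1−u)^θ + θ u^{−α}(1−u)^{θ−1}), so that κ_{d,r}(ρ_{α,θ}) = ∫₀¹ u^d(1−u)^r ρ_{α,θ}(du) and φ_{α,θ}(r) = ∫₀¹ (1−(1−u)^r) ρ_{α,θ}(du). Fix positive integers n_1,…,n_k with n = n_1 + ⋯ + n_k, and for a permutation σ of {1,…,k} set r_j^σ = n_{σ(1)}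 + ⋯ + n_{σ(j)} (with r_0^σ = 0). Then Σ_{σ ∈ S_k} Π_{j=1}^{k} [κ_{n_{σ(j)}, r_{j−1}^σ}(ρ_{α,θ})/φ_{α,θ}(r_j^σ)] = [Π_{i=1}^{k−1} (θ + iα)] · (Γ(1+θ)/Γ(θ+n)) · Π_{j=1}^{k} [Γ(n_j − α)/Γ(1−α)]. -/
open MeasureTheory

/-- κ_{d,r} = ∫₀¹ u^d (1−u)^r f(u) du for a Lévy density with density f on (0,1). -/
noncomputable def kappaF (f : ℝ → ℝ) (d r : ℕ) : ℝ :=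
  ∫ u in Set.Ioo (0:ℝ) 1, u ^ d * (1 - u) ^ r * f u

/-- φ(r) = ∫₀¹ (1 − (1−u)^r) f(u) du for a Lévy density with density f on (0,1). -/
noncomputable def phiF (f : ℝ → ℝ) (r : ℕ) : ℝ :=
  ∫ u in Set.Ioo (0:ℝ) 1, (1 - (1 - u) ^ r) * f u

namespace Stmt13Aux

open Set Finset

lemma beta_integrand_eq {a b : ℝ} {x : ℝ} (hx : x ∈ Ioo (0:ℝ) 1) :
    (x:ℂ) ^ ((a:ℂ) - 1) * (1 - (x:ℂ)) ^ ((b:ℂ) - 1)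
      = ((x ^ (a-1) * (1-x) ^ (b-1) : ℝ) : ℂ) := by
  have h1 : ((a:ℂ) - 1) = ((a - 1 : ℝ) : ℂ) := by push_cast; ring
  have h2 : ((b:ℂ) - 1) = ((b - 1 : ℝ) : ℂ) := by push_cast; ring
  have h3 : (1 - (x:ℂ)) = ((1 - x : ℝ) : ℂ) := by push_cast; ring
  rw [h1, h2, h3, ← Complex.ofReal_cpow hx.1.le, ← Complex.ofReal_cpow (by linarith [hx.2]),
    ← Complex.ofReal_mul]

lemma betaIntegrableOn {a b : ℝ} (ha : 0 < a) (hb : 0 < b) :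
    IntegrableOn (fun u : ℝ => u ^ (a-1) * (1-u) ^ (b-1)) (Ioo 0 1) := by
  have h := Complex.betaIntegral_convergent (u := (a:ℂ)) (v := (b:ℂ)) (by simpa) (by simpa)
  rw [intervalIntegrable_iff, uIoc_of_le (by norm_num : (0:ℝ) ≤ 1)] at h
  have h2 : IntegrableOn (fun x : ℝ => (x:ℂ) ^ ((a:ℂ) - 1) * (1 - (x:ℂ)) ^ ((b:ℂ) - 1))
      (Ioo 0 1) := h.mono_set Ioo_subset_Ioc_self
  have h3 := h2.re
  refine (IntegrableOn.congr_fun h3 (fun x hx => ?_) measurableSet_Ioo)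
  simp only [beta_integrand_eq hx]; exact Complex.ofReal_re _

lemma betaIntegral_real {a b : ℝ} (ha : 0 < a) (hb : 0 < b) :
    ∫ u in Ioo (0:ℝ) 1, u ^ (a-1) * (1-u) ^ (b-1)
      = Real.Gamma a * Real.Gamma b / Real.Gamma (a+b) := by
  have hG : Real.Gamma (a+b) ≠ 0 := (Real.Gamma_pos_of_pos (by linarith)).ne'
  have key := Complex.Gamma_mul_Gamma_eq_betaIntegral
    (s := (a:ℂ)) (t := (b:ℂ)) (by simpa) (by simpa)
  have hc : Complex.betaIntegral a b
      = ((∫ u in Ioo (0:ℝ) 1, u ^ (a-1) * (1-u) ^ (b-1) : ℝ) : ℂ) := by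
    rw [Complex.betaIntegral, intervalIntegral.integral_of_le (by norm_num : (0:ℝ) ≤ 1),
      integral_Ioc_eq_integral_Ioo]
    rw [setIntegral_congr_fun measurableSet_Ioo (fun x hx => beta_integrand_eq hx)]
    exact integral_ofReal
  rw [hc, ← Complex.ofReal_add, Complex.Gamma_ofReal, Complex.Gamma_ofReal,
    Complex.Gamma_ofReal] at key
  have h2 : ((Real.Gamma a * Real.Gamma b : ℝ) : ℂ)
      = ((Real.Gamma (a+b) * ∫ u in Ioo (0:ℝ) 1, u ^ (a-1) * (1-u) ^ (b-1) : ℝ) : ℂ) := by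
    push_cast; exact key
  have h3 := Complex.ofReal_inj.mp h2
  field_simp
  linarith [h3]

section NTR

variable {α θ c : ℝ} {f : ℝ → ℝ}

lemma kappa_pointwise (hf : f = fun u => c * (α * u ^ (-α - 1) * (1 - u) ^ θ
      + θ * u ^ (-α) * (1 - u) ^ (θ - 1))) (d r : ℕ) {u : ℝ} (hu : u ∈ Set.Ioo (0:ℝ) 1) :
    u ^ d * (1 - u) ^ r * f u
      = c * α * (u ^ (((d:ℝ) - α) - 1) * (1-u) ^ (((r:ℝ) + θ + 1) - 1))
        + c * θ * (u ^ (((d:ℝ) - α + 1) - 1) * (1-u) ^ (((r:ℝ) + θ) - 1)) := by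
  obtain ⟨hu0, hu1⟩ := hu
  have hu1' : (0:ℝ) < 1 - u := by linarith
  have e1 : (u:ℝ) ^ (d:ℕ) * u ^ (-α - 1) = u ^ (((d:ℝ) - α) - 1) := by
    rw [show ((d:ℝ) - α) - 1 = (d:ℝ) + (-α - 1) by ring, Real.rpow_add hu0, Real.rpow_natCast]
  have e2 : (u:ℝ) ^ (d:ℕ) * u ^ (-α) = u ^ (((d:ℝ) - α + 1) - 1) := by
    rw [show ((d:ℝ) - α + 1) - 1 = (d:ℝ) + (-α) by ring, Real.rpow_add hu0, Real.rpow_natCast]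
  have e3 : (1-u) ^ (r:ℕ) * (1-u) ^ θ = (1-u) ^ (((r:ℝ) + θ + 1) - 1) := by
    rw [show ((r:ℝ) + θ + 1) - 1 = (r:ℝ) + θ by ring, Real.rpow_add hu1', Real.rpow_natCast]
  have e4 : (1-u) ^ (r:ℕ) * (1-u) ^ (θ - 1) = (1-u) ^ (((r:ℝ) + θ) - 1) := by
    rw [show ((r:ℝ) + θ) - 1 = (r:ℝ) + (θ - 1) by ring, Real.rpow_add hu1', Real.rpow_natCast]
  rw [hf]
  calc u ^ d * (1 - u) ^ r
        * (c * (α * u ^ (-α - 1) * (1 - u) ^ θ + θ * u ^ (-α) * (1 - u) ^ (θ - 1)))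
      = c * α * ((u ^ d * u ^ (-α-1)) * ((1-u) ^ r * (1-u) ^ θ))
        + c * θ * ((u ^ d * u ^ (-α)) * ((1-u) ^ r * (1-u) ^ (θ-1))) := by ring
    _ = _ := by rw [e1, e2, e3, e4]

variable (hα1 : α < 1) (hθ : 0 < θ)
    (hf : f = fun u => c * (α * u ^ (-α - 1) * (1 - u) ^ θ
      + θ * u ^ (-α) * (1 - u) ^ (θ - 1)))

include hα1 hθ hf

lemma kappa_integrableOn (d r : ℕ) (hd : 1 ≤ d) :
    IntegrableOn (fun u : ℝ => u ^ d * (1 - u) ^ r * f u) (Ioo 0 1) := by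
  have hd' : (1:ℝ) ≤ (d:ℝ) := by exact_mod_cast hd
  have ha1 : (0:ℝ) < (d:ℝ) - α := by linarith
  have hb1 : (0:ℝ) < (r:ℝ) + θ + 1 := by positivity
  have ha2 : (0:ℝ) < (d:ℝ) - α + 1 := by linarith
  have hb2 : (0:ℝ) < (r:ℝ) + θ := by positivity
  refine IntegrableOn.congr_fun
    (((betaIntegrableOn ha1 hb1).const_mul (c*α)).add
      ((betaIntegrableOn ha2 hb2).const_mul (c*θ)))
    (fun u hu => (kappa_pointwise hf d r hu).symm) measurableSet_Ioo

lemma kappa_eq (d r : ℕ) (hd : 1 ≤ d) :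
    kappaF f d r = c * (α * r + θ * d)
      * (Real.Gamma ((d:ℝ) - α) * Real.Gamma ((r:ℝ) + θ))
      / Real.Gamma ((d:ℝ) - α + ((r:ℝ) + θ) + 1) := by
  have hd' : (1:ℝ) ≤ (d:ℝ) := by exact_mod_cast hd
  have ha1 : (0:ℝ) < (d:ℝ) - α := by linarith
  have hb1 : (0:ℝ) < (r:ℝ) + θ + 1 := by positivity
  have ha2 : (0:ℝ) < (d:ℝ) - α + 1 := by linarith
  have hb2 : (0:ℝ) < (r:ℝ) + θ := by positivity
  have hS : (0:ℝ) < (d:ℝ) - α + ((r:ℝ) + θ) + 1 := by linarith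
  have hSne : Real.Gamma ((d:ℝ) - α + ((r:ℝ) + θ) + 1) ≠ 0 :=
    (Real.Gamma_pos_of_pos hS).ne'
  rw [kappaF,
    setIntegral_congr_fun measurableSet_Ioo (fun u hu => kappa_pointwise hf d r hu),
    integral_add ((betaIntegrableOn ha1 hb1).const_mul (c*α))
      ((betaIntegrableOn ha2 hb2).const_mul (c*θ)),
    integral_const_mul, integral_const_mul, betaIntegral_real ha1 hb1,
    betaIntegral_real ha2 hb2]
  rw [show (d:ℝ) - α + ((r:ℝ) + θ + 1) = (d:ℝ) - α + ((r:ℝ) + θ) + 1 by ring,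
    show (d:ℝ) - α + 1 + ((r:ℝ) + θ) = (d:ℝ) - α + ((r:ℝ) + θ) + 1 by ring]
  have hG1 : Real.Gamma ((r:ℝ) + θ + 1) = ((r:ℝ) + θ) * Real.Gamma ((r:ℝ) + θ) :=
    Real.Gamma_add_one hb2.ne'
  have hG2 : Real.Gamma ((d:ℝ) - α + 1) = ((d:ℝ) - α) * Real.Gamma ((d:ℝ) - α) :=
    Real.Gamma_add_one ha1.ne'
  rw [hG1, hG2]
  field_simp
  ring

lemma phi_eq (r : ℕ) :
    phiF f r = c * Real.Gamma (1 - α)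
      * ((r:ℝ) * Real.Gamma ((r:ℝ) + θ) / Real.Gamma ((r:ℝ) + 1 - α + θ)) := by
  have h1α : (0:ℝ) < 1 - α := by linarith
  set g : ℕ → ℝ := fun i => (i:ℝ) * Real.Gamma ((i:ℝ) + θ) / Real.Gamma ((i:ℝ) + 1 - α + θ)
    with hg
  have step1 : phiF f r = ∑ i ∈ Finset.range r, kappaF f 1 i := by
    rw [phiF]
    have hpt : ∀ u ∈ Ioo (0:ℝ) 1,
        (1 - (1-u)^r) * f u = ∑ i ∈ Finset.range r, u ^ 1 * (1-u) ^ i * f u := by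
      intro u hu
      have hgeo : (1:ℝ) - (1-u)^r = u * ∑ i ∈ Finset.range r, (1-u)^i := by
        have h := geom_sum_mul (x := (1:ℝ)-u) r
        linear_combination h
      rw [hgeo, Finset.mul_sum, Finset.sum_mul]
      exact Finset.sum_congr rfl fun i _ => by ring
    rw [setIntegral_congr_fun measurableSet_Ioo hpt,
      integral_finset_sum _ (fun i _ => kappa_integrableOn hα1 hθ hf 1 i le_rfl)]
    rfl
  have step2 : ∀ i : ℕ, kappaF f 1 i = c * Real.Gamma (1 - α) * (g (i+1) - g i) := by
    intro i
    have hApos : (0:ℝ) < (i:ℝ) + θ := by positivity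
    have hBpos : (0:ℝ) < (i:ℝ) + 1 - α + θ := by
      have : (0:ℝ) ≤ (i:ℝ) := Nat.cast_nonneg i
      linarith
    have hBne : Real.Gamma ((i:ℝ) + 1 - α + θ) ≠ 0 := (Real.Gamma_pos_of_pos hBpos).ne'
    rw [kappa_eq hα1 hθ hf 1 i le_rfl, hg]
    have hc1 : (((i:ℕ) + 1 : ℕ) : ℝ) = (i:ℝ) + 1 := by push_cast; ring
    simp only [hc1, Nat.cast_one]
    have hG1 : Real.Gamma ((i:ℝ) + 1 + θ) = ((i:ℝ) + θ) * Real.Gamma ((i:ℝ) + θ) := by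
      rw [show (i:ℝ) + 1 + θ = ((i:ℝ) + θ) + 1 by ring, Real.Gamma_add_one hApos.ne']
    have hG2 : Real.Gamma ((1:ℝ) - α + ((i:ℝ) + θ) + 1)
        = ((i:ℝ) + 1 - α + θ) * Real.Gamma ((i:ℝ) + 1 - α + θ) := by
      rw [show (1:ℝ) - α + ((i:ℝ) + θ) + 1 = ((i:ℝ) + 1 - α + θ) + 1 by ring,
        Real.Gamma_add_one hBpos.ne']
    have hG3 : Real.Gamma ((i:ℝ) + 1 + 1 - α + θ)
        = ((i:ℝ) + 1 - α + θ) * Real.Gamma ((i:ℝ) + 1 - α + θ) := by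
      rw [show (i:ℝ) + 1 + 1 - α + θ = ((i:ℝ) + 1 - α + θ) + 1 by ring,
        Real.Gamma_add_one hBpos.ne']
    rw [hG1, hG2, hG3]
    field_simp
    ring
  rw [step1, Finset.sum_congr rfl fun i _ => step2 i, ← Finset.mul_sum,
    Finset.sum_range_sub g]
  have hg0 : g 0 = 0 := by simp [hg]
  rw [hg0, sub_zero, hg]

lemma ratio (hc : 0 < c) (d s : ℕ) (hd : 1 ≤ d) :
    kappaF f d s / phiF f (s + d)
    = (Real.Gamma ((d:ℝ) - α) / Real.Gamma (1 - α))
      * ((α * (s:ℝ) + θ * (d:ℝ)) / ((s:ℝ) + (d:ℝ)))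
      * (Real.Gamma ((s:ℝ) + θ) / Real.Gamma ((s:ℝ) + (d:ℝ) + θ)) := by
  have h1α : (0:ℝ) < 1 - α := by linarith
  have hd' : (1:ℝ) ≤ (d:ℝ) := by exact_mod_cast hd
  have hs0 : (0:ℝ) ≤ (s:ℝ) := Nat.cast_nonneg s
  have hsd : ((s + d : ℕ) : ℝ) = (s:ℝ) + (d:ℝ) := by push_cast; ring
  rw [kappa_eq hα1 hθ hf d s hd, phi_eq hα1 hθ hf (s + d), hsd]
  rw [show (d:ℝ) - α + ((s:ℝ) + θ) + 1 = (s:ℝ) + (d:ℝ) + 1 - α + θ by ring]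
  have hG1 : (0:ℝ) < Real.Gamma ((s:ℝ) + (d:ℝ) + 1 - α + θ) :=
    Real.Gamma_pos_of_pos (by linarith)
  have hG2 : (0:ℝ) < Real.Gamma (1 - α) := Real.Gamma_pos_of_pos h1α
  have hG3 : (0:ℝ) < Real.Gamma ((s:ℝ) + (d:ℝ) + θ) := Real.Gamma_pos_of_pos (by linarith)
  have hG4 : (0:ℝ) < Real.Gamma ((s:ℝ) + θ) := Real.Gamma_pos_of_pos (by linarith)
  have hsdpos : (0:ℝ) < (s:ℝ) + (d:ℝ) := by linarith
  field_simp

end NTR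

lemma telescope_div (h : ℕ → ℝ) (hne : ∀ t, h t ≠ 0) (r : ℕ) :
    ∏ i ∈ range r, h i / h (i+1) = h 0 / h r := by
  induction r with
  | zero => simp [div_self (hne 0)]
  | succ t ih =>
    rw [prod_range_succ, ih]
    field_simp [hne t]

lemma comb (α θ : ℝ) : ∀ (k : ℕ) (m : Fin k → ℕ), (∀ j, 1 ≤ m j) →
    ∑ τ : Equiv.Perm (Fin k), ∏ l : Fin k,
      ((α * ((∑ i ∈ Finset.univ.filter (fun i => l < i), m (τ i) : ℕ) : ℝ)
          + θ * ((m (τ l) : ℕ) : ℝ)) /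
        (((∑ i ∈ Finset.univ.filter (fun i => l < i), m (τ i) : ℕ) : ℝ) + ((m (τ l) : ℕ) : ℝ)))
    = ∏ i ∈ Finset.range k, (θ + (i : ℝ) * α) := by
  intro k
  induction k with
  | zero =>
    intro m hm
    simp
  | succ k ih =>
    intro m hm
    have hn : 0 < ∑ j, m j :=
      lt_of_lt_of_le (hm 0) (Finset.single_le_sum (fun i _ => Nat.zero_le _) (Finset.mem_univ 0))
    have hn' : ((∑ j, m j : ℕ) : ℝ) ≠ 0 := by positivity
    rw [← Equiv.sum_comp (Equiv.Perm.decomposeFin.symm)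
      (fun τ : Equiv.Perm (Fin (k+1)) => ∏ l : Fin (k+1),
        ((α * ((∑ i ∈ Finset.univ.filter (fun i => l < i), m (τ i) : ℕ) : ℝ)
            + θ * ((m (τ l) : ℕ) : ℝ)) /
          (((∑ i ∈ Finset.univ.filter (fun i => l < i), m (τ i) : ℕ) : ℝ) + ((m (τ l) : ℕ) : ℝ)))),
      Fintype.sum_prod_type]
    have key : ∀ p : Fin (k+1),
        (∑ e : Equiv.Perm (Fin k), ∏ l : Fin (k+1),
          ((α * ((∑ i ∈ Finset.univ.filter (fun i => l < i),
                m ((Equiv.Perm.decomposeFin.symm (p, e)) i) : ℕ) : ℝ)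
              + θ * ((m ((Equiv.Perm.decomposeFin.symm (p, e)) l) : ℕ) : ℝ)) /
            (((∑ i ∈ Finset.univ.filter (fun i => l < i),
                m ((Equiv.Perm.decomposeFin.symm (p, e)) i) : ℕ) : ℝ)
              + ((m ((Equiv.Perm.decomposeFin.symm (p, e)) l) : ℕ) : ℝ))))
        = ((α * (((∑ j, m j : ℕ) : ℝ) - (m p : ℝ)) + θ * (m p : ℝ)) / ((∑ j, m j : ℕ) : ℝ))
            * ∏ i ∈ Finset.range k, (θ + (i : ℝ) * α) := by
      intro p
      set m' : Fin k → ℕ := fun i => m (Equiv.swap 0 p i.succ) with hm'def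
      have hm' : ∀ i, 1 ≤ m' i := fun i => hm _
      have hnp : m p + ∑ i, m' i = ∑ j, m j := by
        have h1 : ∑ j, m (Equiv.swap 0 p j) = ∑ j, m j :=
          Equiv.sum_comp (Equiv.swap 0 p) m
        rw [Fin.sum_univ_succ] at h1
        simpa using h1
      have step : ∀ e : Equiv.Perm (Fin k),
          (∏ l : Fin (k+1),
            ((α * ((∑ i ∈ Finset.univ.filter (fun i => l < i),
                  m ((Equiv.Perm.decomposeFin.symm (p, e)) i) : ℕ) : ℝ)
                + θ * ((m ((Equiv.Perm.decomposeFin.symm (p, e)) l) : ℕ) : ℝ)) /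
              (((∑ i ∈ Finset.univ.filter (fun i => l < i),
                  m ((Equiv.Perm.decomposeFin.symm (p, e)) i) : ℕ) : ℝ)
                + ((m ((Equiv.Perm.decomposeFin.symm (p, e)) l) : ℕ) : ℝ))))
          = ((α * ((∑ i, m' i : ℕ) : ℝ) + θ * (m p : ℝ)) /
              (((∑ i, m' i : ℕ) : ℝ) + (m p : ℝ)))
            * ∏ l : Fin k,
              ((α * ((∑ i ∈ Finset.univ.filter (fun i => l < i), m' (e i) : ℕ) : ℝ)
                  + θ * ((m' (e l) : ℕ) : ℝ)) /
                (((∑ i ∈ Finset.univ.filter (fun i => l < i), m' (e i) : ℕ) : ℝ)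
                  + ((m' (e l) : ℕ) : ℝ))) := by
        intro e
        rw [Fin.prod_univ_succ]
        have hsuf0 : (∑ i ∈ Finset.univ.filter (fun i => (0 : Fin (k+1)) < i),
            m ((Equiv.Perm.decomposeFin.symm (p, e)) i)) = ∑ i, m' i := by
          rw [Finset.sum_filter, Fin.sum_univ_succ]
          simp only [lt_self_iff_false, if_false, Fin.succ_pos, if_true,
            Equiv.Perm.decomposeFin_symm_apply_succ]
          rw [zero_add]
          exact Equiv.sum_comp e m'
        have hm0 : m ((Equiv.Perm.decomposeFin.symm (p, e)) 0) = m p := by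
          rw [Equiv.Perm.decomposeFin_symm_apply_zero]
        have hsufs : ∀ l : Fin k,
            (∑ i ∈ Finset.univ.filter (fun i => l.succ < i),
              m ((Equiv.Perm.decomposeFin.symm (p, e)) i))
            = ∑ i ∈ Finset.univ.filter (fun i => l < i), m' (e i) := by
          intro l
          rw [Finset.sum_filter, Finset.sum_filter, Fin.sum_univ_succ]
          have h0 : ¬ (l.succ < (0 : Fin (k+1))) := by simp
          rw [if_neg h0, zero_add]
          refine Finset.sum_congr rfl fun j _ => ?_
          simp only [Fin.succ_lt_succ_iff, Equiv.Perm.decomposeFin_symm_apply_succ]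
          rfl
        have hms : ∀ l : Fin k,
            m ((Equiv.Perm.decomposeFin.symm (p, e)) l.succ) = m' (e l) := by
          intro l
          rw [Equiv.Perm.decomposeFin_symm_apply_succ]
        rw [hsuf0, hm0]
        congr 1
        refine Finset.prod_congr rfl fun l _ => ?_
        rw [hsufs l, hms l]
      rw [Finset.sum_congr rfl fun e _ => step e, ← Finset.mul_sum, ih m' hm']
      congr 2
      · congr 1
        have : ((∑ i, m' i : ℕ) : ℝ) = ((∑ j, m j : ℕ) : ℝ) - (m p : ℝ) := by
          rw [← hnp]; push_cast; ring
        rw [this]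
      · rw [← hnp]; push_cast; ring
    rw [Finset.sum_congr rfl fun p _ => key p, ← Finset.sum_mul, prod_range_succ]
    have hfin : (∑ p : Fin (k+1),
        ((α * (((∑ j, m j : ℕ) : ℝ) - (m p : ℝ)) + θ * (m p : ℝ)) / ((∑ j, m j : ℕ) : ℝ)))
        = θ + (k : ℝ) * α := by
      rw [← Finset.sum_div]
      have h1 : ∑ p : Fin (k+1),
          (α * (((∑ j, m j : ℕ) : ℝ) - (m p : ℝ)) + θ * (m p : ℝ))
          = (θ + (k:ℝ) * α) * ((∑ j, m j : ℕ) : ℝ) := by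
        have hc : ∑ p : Fin (k+1), ((m p : ℕ) : ℝ) = ((∑ j, m j : ℕ) : ℝ) := by
          push_cast; rfl
        rw [Finset.sum_add_distrib]
        simp only [← Finset.mul_sum, Finset.sum_sub_distrib, Finset.sum_const,
          Finset.card_univ, Fintype.card_fin, hc, nsmul_eq_mul]
        push_cast
        ring
      rw [h1, mul_div_assoc, div_self hn', mul_one]
    rw [hfin]
    ring

lemma bridge (k : ℕ) (m : Fin k → ℕ) (α θ : ℝ) :
    ∑ σ : Equiv.Perm (Fin k), ∏ j : Fin k,
      ((α * ((∑ i ∈ Finset.univ.filter (· < j), m (σ i) : ℕ) : ℝ) + θ * ((m (σ j) : ℕ) : ℝ)) /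
        (((∑ i ∈ Finset.univ.filter (· < j), m (σ i) : ℕ) : ℝ) + ((m (σ j) : ℕ) : ℝ)))
    = ∑ τ : Equiv.Perm (Fin k), ∏ l : Fin k,
      ((α * ((∑ i ∈ Finset.univ.filter (fun i => l < i), m (τ i) : ℕ) : ℝ)
          + θ * ((m (τ l) : ℕ) : ℝ)) /
        (((∑ i ∈ Finset.univ.filter (fun i => l < i), m (τ i) : ℕ) : ℝ)
          + ((m (τ l) : ℕ) : ℝ))) := by
  rw [← Equiv.sum_comp (Equiv.mulRight (Fin.revPerm : Equiv.Perm (Fin k)))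
    (fun τ : Equiv.Perm (Fin k) => ∏ l : Fin k,
      ((α * ((∑ i ∈ Finset.univ.filter (fun i => l < i), m (τ i) : ℕ) : ℝ)
          + θ * ((m (τ l) : ℕ) : ℝ)) /
        (((∑ i ∈ Finset.univ.filter (fun i => l < i), m (τ i) : ℕ) : ℝ)
          + ((m (τ l) : ℕ) : ℝ))))]
  refine Finset.sum_congr rfl fun σ _ => ?_
  simp only [Equiv.coe_mulRight]
  refine Finset.prod_nbij' (i := Fin.rev) (j := Fin.rev)
    (fun a _ => Finset.mem_univ _) (fun a _ => Finset.mem_univ _)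
    (fun a _ => Fin.rev_rev a) (fun a _ => Fin.rev_rev a) (fun j _ => ?_)
  have hmm : m ((σ * Fin.revPerm : Equiv.Perm (Fin k)) j.rev) = m (σ j) := by
    simp [Equiv.Perm.mul_apply]
  have hsum : (∑ i ∈ Finset.univ.filter (· < j), m (σ i))
      = ∑ i ∈ Finset.univ.filter (fun i => j.rev < i),
          m ((σ * Fin.revPerm : Equiv.Perm (Fin k)) i) := by
    refine Finset.sum_nbij' (i := Fin.rev) (j := Fin.rev) ?_ ?_
      (fun a _ => Fin.rev_rev a) (fun a _ => Fin.rev_rev a) ?_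
    · intro a ha
      simp only [Finset.mem_filter, Finset.mem_univ, true_and] at ha ⊢
      rw [show j.rev < a.rev ↔ a < j from Fin.rev_lt_rev]
      exact ha
    · intro a ha
      simp only [Finset.mem_filter, Finset.mem_univ, true_and] at ha ⊢
      rw [show a.rev < j ↔ a.rev < j.rev.rev from by rw [Fin.rev_rev],
        show a.rev < j.rev.rev ↔ j.rev < a from Fin.rev_lt_rev]
      exact ha
    · intro a _
      simp [Equiv.Perm.mul_apply]
  rw [hmm, ← hsum]

end Stmt13Aux

/-- The EPPF of the NTR species sampling model with Lévy density
ρ_{α,θ}(du) = c_{α,θ}(α u^{−α−1}(1−u)^θ + θ u^{−α}(1−u)^{θ−1}) du is the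
two-parameter (α,θ) Poisson–Dirichlet EPPF:
Σ_{σ ∈ S_k} Π_{j=1}^{k} κ_{n_{σ(j)}, r_{j−1}^σ}/φ(r_j^σ)
  = [Π_{i=1}^{k−1}(θ+iα)] (Γ(1+θ)/Γ(θ+n)) Π_{j=1}^{k} Γ(n_j−α)/Γ(1−α). -/
theorem stmt_13 (α θ : ℝ) (hα0 : 0 ≤ α) (hα1 : α < 1) (hθ : 0 < θ)
    (c : ℝ) (hc : c = Real.Gamma (θ + 2 - α) / (Real.Gamma (1 - α) * Real.Gamma (1 + θ)))
    (f : ℝ → ℝ)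
    (hf : f = fun u => c * (α * u ^ (-α - 1) * (1 - u) ^ θ + θ * u ^ (-α) * (1 - u) ^ (θ - 1)))
    (k : ℕ) (hk : 0 < k) (m : Fin k → ℕ) (hm : ∀ j, 1 ≤ m j)
    (n : ℕ) (hn : n = ∑ j, m j) :
    ∑ σ : Equiv.Perm (Fin k),
      ∏ j : Fin k,
        kappaF f (m (σ j)) (∑ i ∈ Finset.univ.filter (· < j), m (σ i)) /
          phiF f ((∑ i ∈ Finset.univ.filter (· < j), m (σ i)) + m (σ j))
    = (∏ i ∈ Finset.Icc 1 (k - 1), (θ + (i : ℝ) * α)) *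
        (Real.Gamma (1 + θ) / Real.Gamma (θ + n)) *
        ∏ j, (Real.Gamma (m j - α) / Real.Gamma (1 - α)) := by
  classical
  have h1α : (0:ℝ) < 1 - α := by linarith
  have hcpos : 0 < c := by
    rw [hc]
    exact div_pos (Real.Gamma_pos_of_pos (by linarith))
      (mul_pos (Real.Gamma_pos_of_pos h1α) (Real.Gamma_pos_of_pos (by linarith)))
  -- abbreviations
  set PA : ℝ := ∏ j, (Real.Gamma ((m j : ℝ) - α) / Real.Gamma (1 - α)) with hPA
  -- Step : per-sigma constant factors
  have hA : ∀ σ : Equiv.Perm (Fin k),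
      (∏ j : Fin k, (Real.Gamma ((m (σ j) : ℝ) - α) / Real.Gamma (1 - α))) = PA :=
    fun σ => Equiv.prod_comp σ (fun j => Real.Gamma ((m j : ℝ) - α) / Real.Gamma (1 - α))
  have hC : ∀ σ : Equiv.Perm (Fin k),
      (∏ j : Fin k,
        (Real.Gamma (((∑ i ∈ Finset.univ.filter (· < j), m (σ i) : ℕ) : ℝ) + θ)
          / Real.Gamma (((∑ i ∈ Finset.univ.filter (· < j), m (σ i) : ℕ) : ℝ)
              + ((m (σ j) : ℕ) : ℝ) + θ)))
      = Real.Gamma θ / Real.Gamma ((n:ℝ) + θ) := by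
    intro σ
    set H : ℕ → ℝ := fun t =>
      Real.Gamma (((∑ i ∈ Finset.univ.filter (fun i : Fin k => (i:ℕ) < t), m (σ i) : ℕ) : ℝ) + θ)
      with hH
    have hne : ∀ t, H t ≠ 0 := by
      intro t
      rw [hH]
      exact (Real.Gamma_pos_of_pos (by positivity)).ne'
    have hfil : ∀ j : Fin k, Finset.univ.filter (· < j)
        = Finset.univ.filter (fun i : Fin k => (i:ℕ) < (j:ℕ)) :=
      fun j => Finset.filter_congr fun i _ => Fin.lt_def
    have hins : ∀ j : Fin k,
        (∑ i ∈ Finset.univ.filter (fun i : Fin k => (i:ℕ) < (j:ℕ)), m (σ i)) + m (σ j)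
        = ∑ i ∈ Finset.univ.filter (fun i : Fin k => (i:ℕ) < (j:ℕ) + 1), m (σ i) := by
      intro j
      have hset : Finset.univ.filter (fun i : Fin k => (i:ℕ) < (j:ℕ) + 1)
          = insert j (Finset.univ.filter (fun i : Fin k => (i:ℕ) < (j:ℕ))) := by
        ext i
        simp only [Finset.mem_insert, Finset.mem_filter, Finset.mem_univ, true_and,
          Nat.lt_succ_iff]
        rw [Fin.ext_iff]
        omega
      rw [hset, Finset.sum_insert (by simp)]
      omega
    calc (∏ j : Fin k,
          (Real.Gamma (((∑ i ∈ Finset.univ.filter (· < j), m (σ i) : ℕ) : ℝ) + θ)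
            / Real.Gamma (((∑ i ∈ Finset.univ.filter (· < j), m (σ i) : ℕ) : ℝ)
                + ((m (σ j) : ℕ) : ℝ) + θ)))
        = ∏ j : Fin k, (H (j:ℕ) / H ((j:ℕ) + 1)) := by
          refine Finset.prod_congr rfl fun j _ => ?_
          rw [hH, hfil j]
          have h1 : ((∑ i ∈ Finset.univ.filter (fun i : Fin k => (i:ℕ) < (j:ℕ)), m (σ i) : ℕ) : ℝ)
              + ((m (σ j) : ℕ) : ℝ)
              = ((∑ i ∈ Finset.univ.filter (fun i : Fin k => (i:ℕ) < (j:ℕ) + 1), m (σ i) : ℕ) : ℝ) := by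
            rw [← hins j]; push_cast; ring
          rw [h1]
      _ = ∏ t ∈ Finset.range k, (H t / H (t + 1)) :=
          Fin.prod_univ_eq_prod_range (fun t => H t / H (t+1)) k
      _ = H 0 / H k := Stmt13Aux.telescope_div H hne k
      _ = Real.Gamma θ / Real.Gamma ((n:ℝ) + θ) := by
          have hH0 : H 0 = Real.Gamma θ := by
            have h0 : Finset.univ.filter (fun i : Fin k => (i:ℕ) < 0) = ∅ :=
              Finset.filter_false_of_mem (fun i _ => by omega)
            simp only [hH, h0, Finset.sum_empty, Nat.cast_zero, zero_add]
          have hHk : H k = Real.Gamma ((n:ℝ) + θ) := by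
            have hfilk : Finset.univ.filter (fun i : Fin k => (i:ℕ) < k) = Finset.univ :=
              Finset.filter_true_of_mem (fun i _ => i.isLt)
            simp only [hH, hfilk]
            rw [Equiv.sum_comp σ m, ← hn]
          rw [hH0, hHk]
  -- main computation
  calc ∑ σ : Equiv.Perm (Fin k),
      ∏ j : Fin k,
        kappaF f (m (σ j)) (∑ i ∈ Finset.univ.filter (· < j), m (σ i)) /
          phiF f ((∑ i ∈ Finset.univ.filter (· < j), m (σ i)) + m (σ j))
      = ∑ σ : Equiv.Perm (Fin k), ∏ j : Fin k,
          ((Real.Gamma ((m (σ j) : ℝ) - α) / Real.Gamma (1 - α))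
            * ((α * ((∑ i ∈ Finset.univ.filter (· < j), m (σ i) : ℕ) : ℝ)
                + θ * ((m (σ j) : ℕ) : ℝ))
              / (((∑ i ∈ Finset.univ.filter (· < j), m (σ i) : ℕ) : ℝ) + ((m (σ j) : ℕ) : ℝ)))
            * (Real.Gamma (((∑ i ∈ Finset.univ.filter (· < j), m (σ i) : ℕ) : ℝ) + θ)
              / Real.Gamma (((∑ i ∈ Finset.univ.filter (· < j), m (σ i) : ℕ) : ℝ)
                  + ((m (σ j) : ℕ) : ℝ) + θ))) :=
        Finset.sum_congr rfl fun σ _ => Finset.prod_congr rfl fun j _ =>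
          Stmt13Aux.ratio hα1 hθ hf hcpos (m (σ j)) _ (hm (σ j))
    _ = ∑ σ : Equiv.Perm (Fin k),
          (PA * (Real.Gamma θ / Real.Gamma ((n:ℝ) + θ)))
            * ∏ j : Fin k,
              ((α * ((∑ i ∈ Finset.univ.filter (· < j), m (σ i) : ℕ) : ℝ)
                  + θ * ((m (σ j) : ℕ) : ℝ))
                / (((∑ i ∈ Finset.univ.filter (· < j), m (σ i) : ℕ) : ℝ)
                    + ((m (σ j) : ℕ) : ℝ))) := by
        refine Finset.sum_congr rfl fun σ _ => ?_
        rw [Finset.prod_mul_distrib, Finset.prod_mul_distrib, hA σ, hC σ]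
        ring
    _ = (PA * (Real.Gamma θ / Real.Gamma ((n:ℝ) + θ)))
          * ∑ σ : Equiv.Perm (Fin k), ∏ j : Fin k,
              ((α * ((∑ i ∈ Finset.univ.filter (· < j), m (σ i) : ℕ) : ℝ)
                  + θ * ((m (σ j) : ℕ) : ℝ))
                / (((∑ i ∈ Finset.univ.filter (· < j), m (σ i) : ℕ) : ℝ)
                    + ((m (σ j) : ℕ) : ℝ))) := by
        rw [Finset.mul_sum]
    _ = (PA * (Real.Gamma θ / Real.Gamma ((n:ℝ) + θ)))
          * ∏ i ∈ Finset.range k, (θ + (i : ℝ) * α) := by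
        rw [Stmt13Aux.bridge k m α θ, Stmt13Aux.comb α θ k m hm]
    _ = (∏ i ∈ Finset.Icc 1 (k - 1), (θ + (i : ℝ) * α)) *
          (Real.Gamma (1 + θ) / Real.Gamma (θ + n)) *
          ∏ j, (Real.Gamma ((m j : ℝ) - α) / Real.Gamma (1 - α)) := by
        have hrange : (∏ i ∈ Finset.range k, (θ + (i : ℝ) * α))
            = θ * ∏ i ∈ Finset.Icc 1 (k - 1), (θ + (i : ℝ) * α) := by
          conv_lhs => rw [Finset.range_eq_Ico, Finset.prod_eq_prod_Ico_succ_bot hk,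
            show k = (k-1)+1 from (Nat.succ_pred_eq_of_pos hk).symm, Finset.Ico_add_one_right_eq_Icc]
          norm_num
        have hΓ1θ : Real.Gamma (1+θ) = θ * Real.Gamma θ := by
          rw [add_comm, Real.Gamma_add_one hθ.ne']
        have hΓθn : Real.Gamma (θ + (n:ℝ)) = Real.Gamma ((n:ℝ) + θ) := by
          rw [add_comm]
        rw [hrange, hΓ1θ, hΓθn, hPA]
        ring
end
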